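/- Let g be a nonnegative function on the Hamming cube Ω₂ⁿ. Then 𝔼[g²(log g² − log 𝔼g²)] ≤ 4·𝔼[(Mg)²]. -/

import Mathlib

/-- The Hamming cube `Ω₂ⁿ = {-1,1}ⁿ`, encoded as `Fin n → Bool`. -/
abbrev Cube (n : ℕ) : Type := Fin n → Bool

/-- The sign `±1` associated to a Boolean coordinate. -/
def sgn (b : Bool) : ℝ := if b then 1 else -1

/-- Expectation with respect to the uniform probability measure on the Hamming cube. -/
noncomputable def expect {n : ℕ} (f : Cube n → ℝ) : ℝ :=
  (∑ x : Cube n, f x) / 2 ^ n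

/-- The `i`-th discrete derivative `D_i f(x) = (f(x) - f(σ_i x))/2`, where `σ_i`
flips the `i`-th coordinate. -/
noncomputable def Di {n : ℕ} {E : Type*} [AddCommGroup E] [Module ℝ E]
    (f : Cube n → E) (i : Fin n) (x : Cube n) : E :=
  ((2 : ℝ)⁻¹) • (f x - f (Function.update x i (!x i)))

/-- `(Mg)²(x) = Σᵢ ((D_i g(x))₊)²`. -/
noncomputable def Msq {n : ℕ} (g : Cube n → ℝ) (x : Cube n) : ℝ :=
  ∑ i, (max (Di g i x) 0) ^ 2

/-! ### Auxiliary analytic lemmas -/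

lemma lemA (t : ℝ) (ht : 1 ≤ t) : 2 * Real.log t ≤ t - t⁻¹ := by
  set f : ℝ → ℝ := fun t => t - t⁻¹ - 2 * Real.log t with hf
  have hder : ∀ x : ℝ, 0 < x → HasDerivAt f (1 - (-(x^2)⁻¹) - 2 * x⁻¹) x := by
    intro x hx
    exact ((hasDerivAt_id x).sub (hasDerivAt_inv hx.ne')).sub
      ((Real.hasDerivAt_log hx.ne').const_mul 2)
  have hmono : MonotoneOn f (Set.Ici 1) := by
    apply monotoneOn_of_deriv_nonneg (convex_Ici 1)
    · intro x hx
      have hx0 : (0:ℝ) < x := lt_of_lt_of_le one_pos hx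
      exact (hder x hx0).continuousAt.continuousWithinAt
    · intro x hx
      rw [interior_Ici] at hx
      exact (hder x (lt_trans one_pos hx)).differentiableAt.differentiableWithinAt
    · intro x hx
      rw [interior_Ici] at hx
      have hx0 : (0:ℝ) < x := lt_trans one_pos hx
      rw [(hder x hx0).deriv]
      have h1 : 1 - (-(x^2)⁻¹) - 2 * x⁻¹ = (1 - x⁻¹)^2 := by
        field_simp
        ring
      rw [h1]; positivity
  have h0 : f 1 = 0 := by simp [hf]
  have := hmono (Set.mem_Ici.mpr le_rfl) (Set.mem_Ici.mpr ht) ht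
  rw [h0] at this
  simp only [hf] at this
  linarith

lemma keyIneq (b x : ℝ) (hb : 0 < b) (hbx : b ≤ x) :
    x * Real.log (x^2) - x * Real.log ((x^2+b^2)/2) ≤ x - b := by
  have hx : 0 < x := lt_of_lt_of_le hb hbx
  have hs0 : 0 < (x^2+b^2)/2 := by positivity
  set r : ℝ := Real.sqrt ((x^2+b^2)/2) with hrdef
  have hr0 : 0 < r := Real.sqrt_pos.mpr hs0
  have hr2 : r^2 = (x^2+b^2)/2 := Real.sq_sqrt hs0.le
  have ht1 : 1 ≤ x / r := by
    rw [le_div_iff₀ hr0, one_mul]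
    nlinarith [hr2, sq_nonneg (x - b)]
  have hA := lemA (x / r) ht1
  have hlog : Real.log (x^2) - Real.log ((x^2+b^2)/2) = 2 * Real.log (x / r) := by
    rw [Real.log_div hx.ne' hr0.ne', hrdef, Real.log_sqrt hs0.le, Real.log_pow]
    push_cast; ring
  have key : x * (2 * Real.log (x / r)) ≤ x * ((x/r) - (x/r)⁻¹) :=
    mul_le_mul_of_nonneg_left hA hx.le
  have e1 : x * ((x/r) - (x/r)⁻¹) = x^2/r - r := by
    rw [inv_div]
    field_simp
  have e2 : x^2/r - r ≤ x - b := by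
    rw [div_sub' hr0.ne', div_le_iff₀ hr0]
    nlinarith [hr2, sq_nonneg (2*r - x - b), sq_nonneg (x - b)]
  calc x * Real.log (x^2) - x * Real.log ((x^2+b^2)/2)
      = x * (Real.log (x^2) - Real.log ((x^2+b^2)/2)) := by ring
    _ = x * (2 * Real.log (x / r)) := by rw [hlog]
    _ ≤ x^2/r - r := by rw [← e1]; exact key
    _ ≤ x - b := e2

/-- The two-point entropy inequality: for `0 ≤ b ≤ a`,
`(a²log a² + b²log b²)/2 - s·log s ≤ (a-b)²/2` with `s = (a²+b²)/2`. -/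
lemma twoPoint (a b : ℝ) (hb : 0 ≤ b) (hab : b ≤ a) :
    (a^2 * Real.log (a^2) + b^2 * Real.log (b^2))/2
      - ((a^2+b^2)/2) * Real.log ((a^2+b^2)/2) ≤ (a-b)^2/2 := by
  rcases eq_or_lt_of_le hb with hb0 | hb0
  · -- b = 0
    subst hb0
    simp only [ne_eq, OfNat.ofNat_ne_zero, not_false_eq_true, zero_pow, Real.log_zero,
      mul_zero, add_zero, zero_mul, sub_zero]
    rcases eq_or_lt_of_le hab with ha | ha
    · rw [← ha]; simp
    · have hl : Real.log (a^2/2) = Real.log (a^2) - Real.log 2 :=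
        Real.log_div (by positivity) two_ne_zero
      have h2 : Real.log 2 ≤ 1 := by
        have := Real.log_le_sub_one_of_pos (by norm_num : (0:ℝ) < 2); linarith
      rw [hl]
      nlinarith [sq_nonneg a]
  · -- b > 0 : monotonicity argument
    set φ : ℝ → ℝ := fun x => (x-b)^2/2 -
      ((x^2 * Real.log (x^2) + b^2 * Real.log (b^2))/2
        - ((x^2+b^2)/2) * Real.log ((x^2+b^2)/2)) with hφ
    have hder : ∀ x : ℝ, 0 < x → HasDerivAt φ
        ((x - b) - x * Real.log (x^2) + x * Real.log ((x^2+b^2)/2)) x := by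
      intro x hx
      have hsq : HasDerivAt (fun y : ℝ => y^2) (2*x) x := by
        simpa using hasDerivAt_pow 2 x
      have hx2 : (x:ℝ)^2 ≠ 0 := by positivity
      have hlogsq : HasDerivAt (fun y : ℝ => Real.log (y^2)) ((2*x)/(x^2)) x :=
        hsq.log hx2
      have h2 : HasDerivAt (fun y : ℝ => y^2 * Real.log (y^2))
          (2*x * Real.log (x^2) + x^2 * ((2*x)/(x^2))) x := hsq.mul hlogsq
      have hs0 : ((x:ℝ)^2+b^2)/2 ≠ 0 := by positivity
      have hs : HasDerivAt (fun y : ℝ => (y^2+b^2)/2) ((2*x)/2) x :=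
        (hsq.add_const (b^2)).div_const 2
      have hlogs : HasDerivAt (fun y : ℝ => Real.log ((y^2+b^2)/2))
          (((2*x)/2) / ((x^2+b^2)/2)) x := hs.log hs0
      have h3 : HasDerivAt (fun y : ℝ => ((y^2+b^2)/2) * Real.log ((y^2+b^2)/2))
          ((2*x)/2 * Real.log ((x^2+b^2)/2) + ((x^2+b^2)/2) * (((2*x)/2) / ((x^2+b^2)/2))) x :=
        hs.mul hlogs
      have h1 : HasDerivAt (fun y : ℝ => (y-b)^2/2) ((2 * (x - b)^1 * 1)/2) x :=
        (((hasDerivAt_id x).sub_const b).pow 2).div_const 2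
      have htot := (h1.sub (((h2.add_const (b^2 * Real.log (b^2))).div_const 2).sub h3))
      refine htot.congr_deriv ?_
      field_simp
      ring
    have hmono : MonotoneOn φ (Set.Ici b) := by
      apply monotoneOn_of_deriv_nonneg (convex_Ici b)
      · intro x hx
        exact (hder x (lt_of_lt_of_le hb0 hx)).continuousAt.continuousWithinAt
      · intro x hx
        rw [interior_Ici] at hx
        exact (hder x (lt_trans hb0 hx)).differentiableAt.differentiableWithinAt
      · intro x hx
        rw [interior_Ici] at hx
        rw [(hder x (lt_trans hb0 hx)).deriv]
        have := keyIneq b x hb0 hx.le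
        linarith
    have hφb : φ b = 0 := by
      simp only [hφ]
      have : ((b:ℝ)^2+b^2)/2 = b^2 := by ring
      rw [this]
      ring
    have := hmono (Set.mem_Ici.mpr le_rfl) (Set.mem_Ici.mpr hab) hab
    rw [hφb] at this
    simp only [hφ] at this
    linarith

/-- The two-point inequality without an order assumption. -/
lemma twoPoint' (a b : ℝ) (ha : 0 ≤ a) (hb : 0 ≤ b) :
    (a^2 * Real.log (a^2) + b^2 * Real.log (b^2))/2
      - ((a^2+b^2)/2) * Real.log ((a^2+b^2)/2) ≤ (a-b)^2/2 := by
  rcases le_total b a with h | h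
  · exact twoPoint a b hb h
  · have h2 := twoPoint b a ha h
    have e1 : (a:ℝ)^2 + b^2 = b^2 + a^2 := by ring
    rw [e1, show ((a:ℝ)-b)^2 = (b-a)^2 by ring]
    linarith

/-- Reverse triangle inequality in `ℝ²` (normalized form). -/
lemma sqrtDiff (a b c d : ℝ) :
    (Real.sqrt ((a^2+b^2)/2) - Real.sqrt ((c^2+d^2)/2))^2 ≤ ((a-c)^2 + (b-d)^2)/2 := by
  have hp : (0:ℝ) ≤ (a^2+b^2)/2 := by positivity
  have hq : (0:ℝ) ≤ (c^2+d^2)/2 := by positivity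
  have e1 : Real.sqrt ((a^2+b^2)/2) ^ 2 = (a^2+b^2)/2 := Real.sq_sqrt hp
  have e2 : Real.sqrt ((c^2+d^2)/2) ^ 2 = (c^2+d^2)/2 := Real.sq_sqrt hq
  have hpq : a*c + b*d ≤ 2 * (Real.sqrt ((a^2+b^2)/2) * Real.sqrt ((c^2+d^2)/2)) := by
    rcases le_or_gt (a*c + b*d) 0 with h | h
    · have : (0:ℝ) ≤ 2 * (Real.sqrt ((a^2+b^2)/2) * Real.sqrt ((c^2+d^2)/2)) := by positivity
      linarith
    · have h2 : (a*c+b*d)^2 ≤ (2 * (Real.sqrt ((a^2+b^2)/2) * Real.sqrt ((c^2+d^2)/2)))^2 := by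
        rw [mul_pow, mul_pow, e1, e2]
        nlinarith [sq_nonneg (a*d - b*c)]
      have h3 := Real.sqrt_le_sqrt h2
      rwa [Real.sqrt_sq h.le, Real.sqrt_sq (by positivity)] at h3
  nlinarith [hpq, e1, e2]

/-! ### Combinatorial lemmas on the cube -/

lemma flip_invol {n : ℕ} (i : Fin n) :
    Function.Involutive (fun x : Cube n => Function.update x i (!x i)) := by
  intro x
  simp [Function.update_self, Bool.not_not, Function.update_idem, Function.update_eq_self]

lemma Di_flip {n : ℕ} (g : Cube n → ℝ) (i : Fin n) (x : Cube n) :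
    Di g i (Function.update x i (!x i)) = - Di g i x := by
  simp only [Di, smul_eq_mul, Function.update_self, Bool.not_not, Function.update_idem,
    Function.update_eq_self]
  ring

lemma sum_sq_eq {n : ℕ} (g : Cube n → ℝ) (i : Fin n) :
    ∑ x : Cube n, (Di g i x)^2 = 2 * ∑ x : Cube n, (max (Di g i x) 0)^2 := by
  set e : Equiv.Perm (Cube n) := (flip_invol i).toPerm _ with he
  have h1 : ∑ x : Cube n, (max (Di g i x) 0)^2
      = ∑ x : Cube n, (max (Di g i (Function.update x i (!x i))) 0)^2 :=
    (Equiv.sum_comp e (fun x => (max (Di g i x) 0)^2)).symm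
  rw [two_mul]
  nth_rewrite 2 [h1]
  rw [← Finset.sum_add_distrib]
  apply Finset.sum_congr rfl
  intro x _
  rw [Di_flip]
  rcases le_total (Di g i x) 0 with h | h
  · rw [max_eq_right h, max_eq_left (by linarith : (0:ℝ) ≤ -Di g i x)]
    ring
  · rw [max_eq_left h, max_eq_right (by linarith : -Di g i x ≤ (0:ℝ))]
    ring

lemma expect_mono {n : ℕ} {f g : Cube n → ℝ} (h : ∀ x, f x ≤ g x) : expect f ≤ expect g := by
  unfold expect
  have hs : ∑ x : Cube n, f x ≤ ∑ x : Cube n, g x := Finset.sum_le_sum (fun x _ => h x)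
  gcongr

lemma expect_add {n : ℕ} (f g : Cube n → ℝ) :
    expect (fun x => f x + g x) = expect f + expect g := by
  unfold expect
  rw [Finset.sum_add_distrib, add_div]

lemma expect_const_mul {n : ℕ} (r : ℝ) (f : Cube n → ℝ) :
    expect (fun x => r * f x) = r * expect f := by
  unfold expect
  rw [← Finset.mul_sum, mul_div_assoc]

lemma expect_succ {n : ℕ} (f : Cube (n+1) → ℝ) :
    expect f = expect (fun x : Cube n => (f (Fin.cons true x) + f (Fin.cons false x)) / 2) := by
  unfold expect
  have h : (∑ y : Cube (n+1), f y) = ∑ p : Bool × Cube n, f (Fin.cons p.1 p.2) := by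
    apply Fintype.sum_equiv (Fin.consEquiv fun _ => Bool).symm
    intro y
    simp [Fin.consEquiv]
  rw [h, Fintype.sum_prod_type, Fintype.sum_bool, ← Finset.sum_div, ← Finset.sum_add_distrib]
  rw [pow_succ, div_div]
  ring_nf

lemma Di_cons_zero_true {n : ℕ} (g : Cube (n+1) → ℝ) (x : Cube n) :
    Di g 0 (Fin.cons true x) = (g (Fin.cons true x) - g (Fin.cons false x))/2 := by
  simp only [Di, smul_eq_mul, Fin.cons_zero, Bool.not_true, Fin.update_cons_zero]
  ring

lemma Di_cons_zero_false {n : ℕ} (g : Cube (n+1) → ℝ) (x : Cube n) :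
    Di g 0 (Fin.cons false x) = (g (Fin.cons false x) - g (Fin.cons true x))/2 := by
  simp only [Di, smul_eq_mul, Fin.cons_zero, Bool.not_false, Fin.update_cons_zero]
  ring

lemma Di_cons_succ {n : ℕ} (g : Cube (n+1) → ℝ) (t : Bool) (i : Fin n) (x : Cube n) :
    Di g i.succ (Fin.cons t x) = Di (fun z : Cube n => g (Fin.cons t z)) i x := by
  simp only [Di, smul_eq_mul, Fin.cons_succ, ← Fin.cons_update]

lemma Di_sqrt_bound {n : ℕ} (A B : Cube n → ℝ) (i : Fin n) (x : Cube n) :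
    (Di (fun z => Real.sqrt ((A z^2 + B z^2)/2)) i x)^2
      ≤ ((Di A i x)^2 + (Di B i x)^2)/2 := by
  simp only [Di, smul_eq_mul]
  nlinarith [sqrtDiff (A x) (B x) (A (Function.update x i (!x i))) (B (Function.update x i (!x i)))]

/-! ### The log-Sobolev inequality on the cube -/

lemma lsi : ∀ (n : ℕ) (g : Cube n → ℝ), (∀ x, 0 ≤ g x) →
    expect (fun x => g x ^ 2 *
        (Real.log (g x ^ 2) - Real.log (expect (fun y => g y ^ 2)))) ≤
      2 * expect (fun x => ∑ i, (Di g i x)^2) := by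
  intro n
  induction n with
  | zero =>
    intro g hg
    simp [expect, Finset.univ_unique]
  | succ n ih =>
    intro g hg
    set C : Cube n → ℝ :=
      fun x => Real.sqrt ((g (Fin.cons true x) ^ 2 + g (Fin.cons false x) ^ 2) / 2) with hC
    have hc2 : ∀ x : Cube n,
        C x ^ 2 = (g (Fin.cons true x) ^ 2 + g (Fin.cons false x) ^ 2) / 2 :=
      fun x => Real.sq_sqrt (by positivity)
    have hS : expect (fun y : Cube (n+1) => g y ^ 2) = expect (fun x : Cube n => C x ^ 2) := by
      rw [expect_succ (fun y : Cube (n+1) => g y ^ 2)]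
      congr 1
      funext x
      rw [hc2 x]
    calc expect (fun y : Cube (n+1) => g y ^ 2 *
            (Real.log (g y ^ 2) - Real.log (expect (fun z : Cube (n+1) => g z ^ 2))))
        = expect (fun x : Cube n =>
            ((g (Fin.cons true x) ^ 2 * Real.log (g (Fin.cons true x) ^ 2)
              + g (Fin.cons false x) ^ 2 * Real.log (g (Fin.cons false x) ^ 2)) / 2
              - C x ^ 2 * Real.log (C x ^ 2))
            + C x ^ 2 * (Real.log (C x ^ 2) - Real.log (expect (fun y : Cube n => C y ^ 2)))) := by
          rw [hS, expect_succ]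
          congr 1
          funext x
          rw [hc2 x]
          ring
      _ = expect (fun x : Cube n =>
            (g (Fin.cons true x) ^ 2 * Real.log (g (Fin.cons true x) ^ 2)
              + g (Fin.cons false x) ^ 2 * Real.log (g (Fin.cons false x) ^ 2)) / 2
              - C x ^ 2 * Real.log (C x ^ 2))
          + expect (fun x : Cube n =>
            C x ^ 2 * (Real.log (C x ^ 2) - Real.log (expect (fun y : Cube n => C y ^ 2)))) :=
          expect_add _ _
      _ ≤ expect (fun x : Cube n => (g (Fin.cons true x) - g (Fin.cons false x))^2/2)
          + 2 * expect (fun x : Cube n => ∑ i, (Di C i x)^2) := by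
          apply add_le_add
          · apply expect_mono
            intro x
            rw [hc2 x]
            exact twoPoint' _ _ (hg _) (hg _)
          · exact ih C (fun x => Real.sqrt_nonneg _)
      _ ≤ expect (fun x : Cube n => (g (Fin.cons true x) - g (Fin.cons false x))^2/2)
          + 2 * expect (fun x : Cube n => ∑ i,
              ((Di (fun z : Cube n => g (Fin.cons true z)) i x)^2
                + (Di (fun z : Cube n => g (Fin.cons false z)) i x)^2)/2) := by
          apply add_le_add_right
          apply mul_le_mul_of_nonneg_left _ (by norm_num : (0:ℝ) ≤ 2)
          apply expect_mono
          intro x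
          apply Finset.sum_le_sum
          intro i _
          exact Di_sqrt_bound _ _ i x
      _ = 2 * expect (fun y : Cube (n+1) => ∑ j, (Di g j y)^2) := by
          rw [expect_succ (fun y : Cube (n+1) => ∑ j, (Di g j y)^2)]
          rw [← expect_const_mul 2 _, ← expect_const_mul 2 _, ← expect_add]
          congr 1
          funext x
          rw [Fin.sum_univ_succ (fun j : Fin (n+1) => (Di g j (Fin.cons true x))^2),
            Fin.sum_univ_succ (fun j : Fin (n+1) => (Di g j (Fin.cons false x))^2),
            Di_cons_zero_true, Di_cons_zero_false]
          simp only [Di_cons_succ]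
          rw [← Finset.sum_div, Finset.sum_add_distrib]
          ring

/-- For every nonnegative function `g` on the Hamming cube,
`𝔼[g²(log g² − log 𝔼g²)] ≤ 4·𝔼[(Mg)²]`. -/
theorem entropy_le_Msq {n : ℕ} (g : Cube n → ℝ) (hg : ∀ x, 0 ≤ g x) :
    expect (fun x => g x ^ 2 *
        (Real.log (g x ^ 2) - Real.log (expect (fun y => g y ^ 2)))) ≤
      4 * expect (fun x => Msq g x) := by
  have h := lsi n g hg
  have he : 2 * expect (fun x => ∑ i, (Di g i x)^2) = 4 * expect (fun x => Msq g x) := by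
    unfold expect Msq
    have hsum : ∑ x : Cube n, ∑ i, (Di g i x)^2
        = 2 * ∑ x : Cube n, ∑ i, (max (Di g i x) 0)^2 := by
      rw [Finset.sum_comm]
      calc ∑ i, ∑ x : Cube n, (Di g i x)^2
          = ∑ i, 2 * ∑ x : Cube n, (max (Di g i x) 0)^2 :=
            Finset.sum_congr rfl (fun i _ => sum_sq_eq g i)
        _ = 2 * ∑ i, ∑ x : Cube n, (max (Di g i x) 0)^2 := by rw [Finset.mul_sum]
        _ = 2 * ∑ x : Cube n, ∑ i, (max (Di g i x) 0)^2 := by rw [Finset.sum_comm]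
    rw [hsum]
    ring
  linarith
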